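/- For any bounded A-bimodule linear map φ : C → A, the induced map f(φ) : D → B is the unique linear map satisfying ⟨x·f(φ)(d), z⟩_A = φ(⟨x·d, z⟩_C) for all d ∈ D and x, z ∈ X. -/
import Mathlib


/-- A pair `(X, Y)` implementing a strong Morita equivalence of unital inclusions
`A ⊆ C` and `B ⊆ D` of unital C*-algebras: `Y` is a `C`–`D`-equivalence bimodule and
`X` is a closed subspace of `Y` which is an `A`–`B`-equivalence bimodule with the
restricted actions and inner products. -/
structure MoritaPair
    (A : Type*) [NormedRing A] [StarRing A] [CStarRing A] [NormedAlgebra ℂ A]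
      [CompleteSpace A] [StarModule ℂ A]
    (C : Type*) [NormedRing C] [StarRing C] [CStarRing C] [NormedAlgebra ℂ C]
      [CompleteSpace C] [StarModule ℂ C]
    (B : Type*) [NormedRing B] [StarRing B] [CStarRing B] [NormedAlgebra ℂ B]
      [CompleteSpace B] [StarModule ℂ B]
    (D : Type*) [NormedRing D] [StarRing D] [CStarRing D] [NormedAlgebra ℂ D]
      [CompleteSpace D] [StarModule ℂ D]
    (X : Type*) [NormedAddCommGroup X] [NormedSpace ℂ X]
    (Y : Type*) [NormedAddCommGroup Y] [NormedSpace ℂ Y] [CompleteSpace Y] where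
  /-- the unital isometric *-embedding of `A` into `C` -/
  ιA : A →⋆ₐ[ℂ] C
  /-- the unital isometric *-embedding of `B` into `D` -/
  ιB : B →⋆ₐ[ℂ] D
  ιA_isometry : Isometry ιA
  ιB_isometry : Isometry ιB
  /-- the inclusion of the closed subspace `X` into `Y` -/
  incl : X →ₗ[ℂ] Y
  incl_norm : ∀ x, ‖incl x‖ = ‖x‖
  incl_closed : IsClosed (Set.range incl)
  /-- left action of `C` on `Y` -/
  lC : C → Y → Y
  lC_one : ∀ y, lC 1 y = y
  lC_mul : ∀ c c' y, lC (c * c') y = lC c (lC c' y)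
  lC_add_right : ∀ c y y', lC c (y + y') = lC c y + lC c y'
  lC_add_left : ∀ c c' y, lC (c + c') y = lC c y + lC c' y
  lC_smul : ∀ (z : ℂ) c y, lC (z • c) y = z • lC c y
  /-- right action of `D` on `Y` -/
  rD : Y → D → Y
  rD_one : ∀ y, rD y 1 = y
  rD_mul : ∀ y d d', rD y (d * d') = rD (rD y d) d'
  rD_add_left : ∀ y y' d, rD (y + y') d = rD y d + rD y' d
  rD_add_right : ∀ y d d', rD y (d + d') = rD y d + rD y d'
  rD_smul : ∀ (z : ℂ) y d, rD y (z • d) = z • rD y d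
  smul_assoc : ∀ c y d, rD (lC c y) d = lC c (rD y d)
  /-- the left `C`-valued inner product on `Y` -/
  innC : Y → Y → C
  innC_add_left : ∀ y y' z, innC (y + y') z = innC y z + innC y' z
  innC_star : ∀ y z, star (innC y z) = innC z y
  innC_lC : ∀ c y z, innC (lC c y) z = c * innC y z
  innC_norm : ∀ y, ‖innC y y‖ = ‖y‖ ^ 2
  /-- the right `D`-valued inner product on `Y` -/
  innD : Y → Y → D
  innD_add_right : ∀ y z z', innD y (z + z') = innD y z + innD y z'
  innD_star : ∀ y z, star (innD y z) = innD z y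
  innD_rD : ∀ y z d, innD y (rD z d) = innD y z * d
  innD_norm : ∀ y, ‖innD y y‖ = ‖y‖ ^ 2
  imprimitivity : ∀ y z w, lC (innC y z) w = rD y (innD z w)
  innC_full : (Submodule.span ℂ {c : C | ∃ y z, innC y z = c}).topologicalClosure = ⊤
  innD_full : (Submodule.span ℂ {d : D | ∃ y z, innD y z = d}).topologicalClosure = ⊤
  /-- left action of `A` on `X`, the restriction of the `C`-action -/
  lA : A → X → X
  lA_compat : ∀ a x, incl (lA a x) = lC (ιA a) (incl x)
  /-- right action of `B` on `X`, the restriction of the `D`-action -/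
  rB : X → B → X
  rB_compat : ∀ x b, incl (rB x b) = rD (incl x) (ιB b)
  /-- the left `A`-valued inner product on `X`, the restriction of `innC` -/
  innA : X → X → A
  innA_compat : ∀ x z, ιA (innA x z) = innC (incl x) (incl z)
  /-- the right `B`-valued inner product on `X`, the restriction of `innD` -/
  innB : X → X → B
  innB_compat : ∀ x z, ιB (innB x z) = innD (incl x) (incl z)
  innA_full : (Submodule.span ℂ {a : A | ∃ x z, innA x z = a}).topologicalClosure = ⊤
  innB_full : (Submodule.span ℂ {b : B | ∃ x z, innB x z = b}).topologicalClosure = ⊤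

variable {A : Type*} [NormedRing A] [StarRing A] [CStarRing A] [NormedAlgebra ℂ A]
  [CompleteSpace A] [StarModule ℂ A]
variable {C : Type*} [NormedRing C] [StarRing C] [CStarRing C] [NormedAlgebra ℂ C]
  [CompleteSpace C] [StarModule ℂ C]
variable {B : Type*} [NormedRing B] [StarRing B] [CStarRing B] [NormedAlgebra ℂ B]
  [CompleteSpace B] [StarModule ℂ B]
variable {D : Type*} [NormedRing D] [StarRing D] [CStarRing D] [NormedAlgebra ℂ D]
  [CompleteSpace D] [StarModule ℂ D]
variable {X : Type*} [NormedAddCommGroup X] [NormedSpace ℂ X]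
variable {Y : Type*} [NormedAddCommGroup Y] [NormedSpace ℂ Y] [CompleteSpace Y]

namespace MoritaPair

variable (M : MoritaPair A C B D X Y)

lemma incl_inj : Function.Injective M.incl := by
  intro u v h
  have h2 : ‖u - v‖ = 0 := by rw [← M.incl_norm, map_sub, h, sub_self, norm_zero]
  exact sub_eq_zero.mp (norm_eq_zero.mp h2)

lemma iA_inj : Function.Injective M.ιA := M.ιA_isometry.injective
lemma iB_inj : Function.Injective M.ιB := M.ιB_isometry.injective

/-- `rD` with first argument fixed, as a linear map. -/
def rDL (y : Y) : D →ₗ[ℂ] Y where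
  toFun d := M.rD y d
  map_add' := M.rD_add_right y
  map_smul' z d := M.rD_smul z y d

@[simp] lemma rDL_apply (y : Y) (d : D) : M.rDL y d = M.rD y d := rfl

lemma innC_smul_left (μ : ℂ) (y z : Y) : M.innC (μ • y) z = μ • M.innC y z := by
  have h : μ • y = M.lC (μ • (1 : C)) y := by rw [M.lC_smul, M.lC_one]
  rw [h, M.innC_lC, smul_mul_assoc, one_mul]

/-- `innC` with second argument fixed, as a linear map in the first variable. -/
def innCL1 (z : Y) : Y →ₗ[ℂ] C where
  toFun y := M.innC y z
  map_add' y y' := M.innC_add_left y y' z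
  map_smul' μ y := M.innC_smul_left μ y z

@[simp] lemma innCL1_apply (z y : Y) : M.innCL1 z y = M.innC y z := rfl

lemma innC_add_right (y z z' : Y) :
    M.innC y (z + z') = M.innC y z + M.innC y z' := by
  rw [← star_star (M.innC y (z + z')), M.innC_star, M.innC_add_left, star_add,
    M.innC_star, M.innC_star]

/-- `innC` with first argument fixed, as an additive monoid hom in the second variable. -/
def innCA2 (y : Y) : Y →+ C :=
  AddMonoidHom.mk' (fun z => M.innC y z) (fun z z' => M.innC_add_right y z z')

@[simp] lemma innCA2_apply (y z : Y) : M.innCA2 y z = M.innC y z := rfl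

lemma innD_smul_right (μ : ℂ) (y z : Y) : M.innD y (μ • z) = μ • M.innD y z := by
  have h : μ • z = M.rD z (μ • (1 : D)) := by rw [M.rD_smul, M.rD_one]
  rw [h, M.innD_rD, mul_smul_comm, mul_one]

lemma innB_add_right (x u u' : X) :
    M.innB x (u + u') = M.innB x u + M.innB x u' := by
  apply M.iB_inj
  rw [map_add, M.innB_compat, M.innB_compat, M.innB_compat, map_add, M.innD_add_right]

lemma innB_smul_right (μ : ℂ) (x u : X) : M.innB x (μ • u) = μ • M.innB x u := by
  apply M.iB_inj
  rw [map_smul, M.innB_compat, M.innB_compat, map_smul, M.innD_smul_right]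

/-- `innB` with first argument fixed, as a linear map in the second variable. -/
def innBL2 (x : X) : X →ₗ[ℂ] B where
  toFun u := M.innB x u
  map_add' u u' := M.innB_add_right x u u'
  map_smul' μ u := M.innB_smul_right μ x u

@[simp] lemma innBL2_apply (x u : X) : M.innBL2 x u = M.innB x u := rfl

/-- `lA` with second argument fixed, as a linear map in the algebra variable. -/
def lAL (u : X) : A →ₗ[ℂ] X where
  toFun a := M.lA a u
  map_add' a a' := by
    apply M.incl_inj
    rw [map_add, M.lA_compat, M.lA_compat, M.lA_compat, map_add, M.lC_add_left]
  map_smul' μ a := by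
    apply M.incl_inj
    rw [map_smul, M.lA_compat, M.lA_compat, map_smul, M.lC_smul, RingHom.id_apply]

@[simp] lemma lAL_apply (u : X) (a : A) : M.lAL u a = M.lA a u := rfl

/-- `rB` with first argument fixed, as a linear map. -/
def rBL (x : X) : B →ₗ[ℂ] X where
  toFun b := M.rB x b
  map_add' b b' := by
    apply M.incl_inj
    rw [map_add, M.rB_compat, M.rB_compat, M.rB_compat, map_add, M.rD_add_right]
  map_smul' μ b := by
    apply M.incl_inj
    rw [map_smul, M.rB_compat, M.rB_compat, map_smul, M.rD_smul, RingHom.id_apply]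

@[simp] lemma rBL_apply (x : X) (b : B) : M.rBL x b = M.rB x b := rfl

lemma innA_smul_left (μ : ℂ) (u z : X) : M.innA (μ • u) z = μ • M.innA u z := by
  apply M.iA_inj
  rw [map_smul, M.innA_compat, M.innA_compat, map_smul, M.innC_smul_left]

/-- `innA` with second argument fixed, as a linear map in the first variable. -/
def innAL1 (z : X) : X →ₗ[ℂ] A where
  toFun u := M.innA u z
  map_add' u u' := by
    apply M.iA_inj
    rw [map_add, M.innA_compat, M.innA_compat, M.innA_compat, map_add, M.innC_add_left]
  map_smul' μ u := M.innA_smul_left μ u z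

@[simp] lemma innAL1_apply (z u : X) : M.innAL1 z u = M.innA u z := rfl

lemma innA_lA (a : A) (u z : X) : M.innA (M.lA a u) z = a * M.innA u z := by
  apply M.iA_inj
  rw [map_mul, M.innA_compat, M.innA_compat, M.lA_compat, M.innC_lC]

lemma imprim_X (x w u : X) : M.rB x (M.innB w u) = M.lA (M.innA x w) u := by
  apply M.incl_inj
  rw [M.rB_compat, M.innB_compat, M.lA_compat, M.innA_compat, M.imprimitivity]

lemma innB_mul (x z : X) (b : B) : M.innB x z * b = M.innB x (M.rB z b) := by
  apply M.iB_inj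
  rw [map_mul, M.innB_compat, M.innB_compat, M.rB_compat, M.innD_rD]

lemma innB_star' (x z : X) : star (M.innB x z) = M.innB z x := by
  apply M.iB_inj
  rw [map_star, M.innB_compat, M.innB_compat, M.innD_star]

lemma norm_innA_self (u : X) : ‖M.innA u u‖ = ‖u‖ ^ 2 := by
  rw [← M.ιA_isometry.norm_map_of_map_zero (map_zero _), M.innA_compat, M.innC_norm,
    M.incl_norm]

lemma innC_mul_innC (y z w v : Y) :
    M.innC y z * M.innC w v = M.innC (M.rD y (M.innD z w)) v := by
  rw [← M.innC_lC, M.imprimitivity]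

lemma innC_mul_innC' (w v u t : Y) :
    M.innC w v * M.innC u t = M.innC w (M.rD t (M.innD u v)) := by
  rw [← star_star (M.innC w v * M.innC u t), star_mul, M.innC_star, M.innC_star,
    M.innC_mul_innC]
  exact M.innC_star _ _

lemma exists_rep : ∃ (n : ℕ) (p q : Fin n → X), ∑ i, M.innB (p i) (q i) = 1 := by
  classical
  set S : Set B := {b | ∃ x z, M.innB x z = b} with hS
  have hmul : ∀ b ∈ Submodule.span ℂ S, ∀ c : B, b * c ∈ Submodule.span ℂ S := by
    intro b hb c
    induction hb using Submodule.span_induction with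
    | mem u hu =>
      obtain ⟨x, z, rfl⟩ := hu
      exact Submodule.subset_span ⟨x, M.rB z c, (M.innB_mul x z c).symm⟩
    | zero => simp only [zero_mul]; exact Submodule.zero_mem (Submodule.span ℂ S)
    | add u v hu hv ihu ihv => simpa [add_mul] using Submodule.add_mem _ ihu ihv
    | smul μ u hu ih => simpa [smul_mul_assoc] using Submodule.smul_mem _ μ ih
  have htop : (1 : B) ∈ (Submodule.span ℂ S).topologicalClosure := by
    rw [M.innB_full]; exact Submodule.mem_top
  have h1 : (1 : B) ∈ closure ((Submodule.span ℂ S : Set B)) := by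
    rwa [← Submodule.topologicalClosure_coe]
  obtain ⟨b, hbI, hbd⟩ := Metric.mem_closure_iff.mp h1 1 one_pos
  have hnorm : ‖(1 : B) - b‖ < 1 := by rwa [dist_eq_norm] at hbd
  have hu : IsUnit b := by
    have := isUnit_one_sub_of_norm_lt_one hnorm
    simpa using this
  obtain ⟨u, hu⟩ := hu
  have hbu : b * ↑u⁻¹ = 1 := by rw [← hu]; exact u.mul_inv
  have h1mem : (1 : B) ∈ Submodule.span ℂ S := hbu ▸ hmul b hbI ↑u⁻¹
  obtain ⟨n, f, g, hg⟩ := Submodule.mem_span_set'.mp h1mem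
  choose p q hpq using fun i => (g i).2
  refine ⟨n, p, fun i => f i • q i, ?_⟩
  calc ∑ i, M.innB (p i) (f i • q i) = ∑ i, f i • (g i : B) := by
        refine Finset.sum_congr rfl fun i _ => ?_
        rw [M.innB_smul_right, hpq]
    _ = 1 := hg

end MoritaPair

/-- for any bounded `A`-bimodule linear map `φ : C → A`, the induced map
`f(φ) : D → B` is the unique linear map satisfying
`⟨x·f(φ)(d), z⟩_A = φ(⟨x·d, z⟩_C)` for all `d ∈ D`, `x, z ∈ X`. -/
theorem stmt8 (M : MoritaPair A C B D X Y) (φ : C →L[ℂ] A)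
    (hφ : ∀ (a : A) (c : C), φ (M.ιA a * c) = a * φ c ∧ φ (c * M.ιA a) = φ c * a) :
    ∃! ψ : D →ₗ[ℂ] B, ∀ (d : D) (x z : X),
      M.innA (M.rB x (ψ d)) z = φ (M.innC (M.rD (M.incl x) d) (M.incl z)) := by
  classical
  obtain ⟨n, p, q, hrep⟩ := M.exists_rep
  have hrep' : ∑ i, M.innB (q i) (p i) = 1 := by
    have h := congrArg star hrep
    simpa only [star_sum, star_one, M.innB_star'] using h
  set Ψ : D →ₗ[ℂ] B :=
    ∑ i : Fin n, ∑ k : Fin n,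
      (M.innBL2 (p i)).comp ((M.lAL (q k)).comp ((φ.toLinearMap).comp
        ((M.innCL1 (M.incl (p k))).comp (M.rDL (M.incl (q i)))))) with hΨ
  have hΨd : ∀ d : D, Ψ d = ∑ i, ∑ k,
      M.innB (p i) (M.lA (φ (M.innC (M.rD (M.incl (q i)) d) (M.incl (p k)))) (q k)) := by
    intro d
    rw [hΨ]
    simp only [LinearMap.coe_sum, Finset.sum_apply, LinearMap.coe_comp,
      Function.comp_apply, MoritaPair.rDL_apply, MoritaPair.innCL1_apply,
      ContinuousLinearMap.coe_coe, MoritaPair.lAL_apply, MoritaPair.innBL2_apply]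
  have key : ∀ (d : D) (x z : X),
      M.innA (M.rB x (Ψ d)) z = φ (M.innC (M.rD (M.incl x) d) (M.incl z)) := by
    intro d x z
    set a : Fin n → Fin n → A :=
      fun i k => φ (M.innC (M.rD (M.incl (q i)) d) (M.incl (p k))) with ha
    have hpush : ∀ (g : Fin n → Fin n → B),
        M.innA (M.rB x (∑ i, ∑ k, g i k)) z = ∑ i, ∑ k, M.innA (M.rB x (g i k)) z := by
      intro g
      simp only [← M.rBL_apply, ← M.innAL1_apply, map_sum]
    have h1 : M.innA (M.rB x (Ψ d)) z
        = ∑ i, ∑ k, M.innA x (p i) * (a i k * M.innA (q k) z) := by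
      rw [hΨd d, hpush]
      refine Finset.sum_congr rfl fun i _ => Finset.sum_congr rfl fun k _ => ?_
      rw [M.imprim_X, M.innA_lA, M.innA_lA]
    have h2 : ∀ k, ∑ i, M.innA x (p i) * a i k
        = φ (M.innC (M.rD (M.incl x) d) (M.incl (p k))) := by
      intro k
      have hterm : ∀ i, M.innA x (p i) * a i k
          = φ (M.innC (M.rD (M.incl x) (M.ιB (M.innB (p i) (q i)) * d)) (M.incl (p k))) := by
        intro i
        have harg : M.ιA (M.innA x (p i)) * M.innC (M.rD (M.incl (q i)) d) (M.incl (p k))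
            = M.innC (M.rD (M.incl x) (M.ιB (M.innB (p i) (q i)) * d)) (M.incl (p k)) := by
          rw [M.innA_compat, M.innC_mul_innC, M.innD_rD, ← M.innB_compat]
        rw [ha]
        rw [← (hφ (M.innA x (p i)) (M.innC (M.rD (M.incl (q i)) d) (M.incl (p k)))).1, harg]
      set L : D →ₗ[ℂ] A :=
        (φ.toLinearMap).comp ((M.innCL1 (M.incl (p k))).comp (M.rDL (M.incl x))) with hL
      calc ∑ i, M.innA x (p i) * a i k
          = ∑ i, L (M.ιB (M.innB (p i) (q i)) * d) :=
            Finset.sum_congr rfl fun i _ => hterm i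
        _ = L ((∑ i, M.ιB (M.innB (p i) (q i))) * d) := by
            rw [Finset.sum_mul, map_sum]
        _ = L ((M.ιB (∑ i, M.innB (p i) (q i))) * d) := by rw [map_sum]
        _ = L d := by rw [hrep, map_one, one_mul]
        _ = φ (M.innC (M.rD (M.incl x) d) (M.incl (p k))) := rfl
    have h3 : ∑ k, φ (M.innC (M.rD (M.incl x) d) (M.incl (p k))) * M.innA (q k) z
        = φ (M.innC (M.rD (M.incl x) d) (M.incl z)) := by
      have hterm : ∀ k, φ (M.innC (M.rD (M.incl x) d) (M.incl (p k))) * M.innA (q k) z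
          = φ (M.innC (M.rD (M.incl x) d)
              (M.rD (M.incl z) (M.ιB (M.innB (q k) (p k))))) := by
        intro k
        have harg : M.innC (M.rD (M.incl x) d) (M.incl (p k)) * M.ιA (M.innA (q k) z)
            = M.innC (M.rD (M.incl x) d)
              (M.rD (M.incl z) (M.ιB (M.innB (q k) (p k)))) := by
          rw [M.innA_compat, M.innC_mul_innC', ← M.innB_compat]
        rw [← (hφ (M.innA (q k) z) (M.innC (M.rD (M.incl x) d) (M.incl (p k)))).2, harg]
      have pull : ∀ (g : Fin n → B),
          ∑ k, φ (M.innC (M.rD (M.incl x) d) (M.rD (M.incl z) (M.ιB (g k))))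
          = φ (M.innC (M.rD (M.incl x) d) (M.rD (M.incl z) (M.ιB (∑ k, g k)))) := by
        intro g
        simp only [← M.rDL_apply, ← M.innCA2_apply, map_sum]
      calc ∑ k, φ (M.innC (M.rD (M.incl x) d) (M.incl (p k))) * M.innA (q k) z
          = ∑ k, φ (M.innC (M.rD (M.incl x) d)
              (M.rD (M.incl z) (M.ιB (M.innB (q k) (p k))))) :=
            Finset.sum_congr rfl fun k _ => hterm k
        _ = φ (M.innC (M.rD (M.incl x) d)
              (M.rD (M.incl z) (M.ιB (∑ k, M.innB (q k) (p k))))) := pull _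
        _ = φ (M.innC (M.rD (M.incl x) d) (M.incl z)) := by
            rw [hrep', map_one, M.rD_one]
    calc M.innA (M.rB x (Ψ d)) z
        = ∑ i, ∑ k, M.innA x (p i) * (a i k * M.innA (q k) z) := h1
      _ = ∑ k, ∑ i, (M.innA x (p i) * a i k) * M.innA (q k) z := by
          rw [Finset.sum_comm]
          exact Finset.sum_congr rfl fun k _ => Finset.sum_congr rfl fun i _ =>
            (mul_assoc _ _ _).symm
      _ = ∑ k, (∑ i, M.innA x (p i) * a i k) * M.innA (q k) z := by
          exact Finset.sum_congr rfl fun k _ => (Finset.sum_mul _ _ _).symm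
      _ = ∑ k, φ (M.innC (M.rD (M.incl x) d) (M.incl (p k))) * M.innA (q k) z :=
          Finset.sum_congr rfl fun k _ => by rw [h2 k]
      _ = φ (M.innC (M.rD (M.incl x) d) (M.incl z)) := h3
  refine ⟨Ψ, key, ?_⟩
  intro ψ' h'
  ext d
  have hz : ∀ x : X, M.rB x (ψ' d - Ψ d) = 0 := by
    intro x
    have h0 : ∀ zq : X, M.innA (M.rB x (ψ' d - Ψ d)) zq = 0 := by
      intro zq
      have e1 : M.rB x (ψ' d - Ψ d) = M.rB x (ψ' d) - M.rB x (Ψ d) :=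
        map_sub (M.rBL x) _ _
      have e2 : M.innA (M.rB x (ψ' d) - M.rB x (Ψ d)) zq
          = M.innA (M.rB x (ψ' d)) zq - M.innA (M.rB x (Ψ d)) zq :=
        map_sub (M.innAL1 zq) _ _
      rw [e1, e2, h' d x zq, key d x zq, sub_self]
    have h00 := h0 (M.rB x (ψ' d - Ψ d))
    have hn : ‖M.rB x (ψ' d - Ψ d)‖ ^ 2 = 0 := by
      rw [← M.norm_innA_self, h00, norm_zero]
    exact norm_eq_zero.mp ((pow_eq_zero_iff two_ne_zero).mp hn)
  have hb : ψ' d - Ψ d = 0 := by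
    have e : ψ' d - Ψ d = (∑ i, M.innB (p i) (q i)) * (ψ' d - Ψ d) := by
      rw [hrep, one_mul]
    rw [e, Finset.sum_mul]
    refine Finset.sum_eq_zero fun i _ => ?_
    rw [M.innB_mul, hz (q i)]
    exact map_zero (M.innBL2 (p i))
  exact sub_eq_zero.mp hb
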